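/- arXiv:2210.13411 — 2 statements merged into one kernel-verified Lean document; each statement's English description precedes it below -/
import Mathlib

section
/- Let n, d, k be positive integers and suppose the circle equation a^2 + (b + (d-d_1)/(kn) + k/2)^2 = ((d-d_1)/(kn) + k/2)^2 - 2d/n has a solution with a > 0, where 0 ≤ d_1 ≤ d. Then d_1 < d + (k^2 n)/2 - k√(2nd). -/
theorem wall_circle_bound (n d k : ℕ) (hn : 0 < n) (hd : 0 < d) (hk : 0 < k)
    (d₁ : ℤ) (hd₁0 : 0 ≤ d₁) (hd₁d : d₁ ≤ d)
    (h : ∃ a b : ℝ, 0 < a ∧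
      a^2 + (b + ((d:ℝ) - d₁)/(k*n) + (k:ℝ)/2)^2
        = (((d:ℝ) - d₁)/(k*n) + (k:ℝ)/2)^2 - 2*(d:ℝ)/n) :
    (d₁ : ℝ) < (d:ℝ) + (k:ℝ)^2*n/2 - k*Real.sqrt (2*(n:ℝ)*d) := by
  obtain ⟨a, b, ha, heq⟩ := h
  set R : ℝ := ((d:ℝ) - d₁)/(k*n) + (k:ℝ)/2 with hR
  have hnR : (0:ℝ) < n := by exact_mod_cast hn
  have hkR : (0:ℝ) < k := by exact_mod_cast hk
  have hdR : (0:ℝ) < d := by exact_mod_cast hd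
  have hd1 : (d₁:ℝ) ≤ (d:ℝ) := by exact_mod_cast hd₁d
  have hknR : (0:ℝ) < (k:ℝ)*n := by positivity
  have hRpos : 0 < R := by
    have : 0 ≤ ((d:ℝ) - d₁)/(k*n) := by
      apply div_nonneg (by linarith) hknR.le
    have hk2 : (0:ℝ) < (k:ℝ)/2 := by positivity
    rw [hR]; linarith
  have hgt : 2*(d:ℝ)/n < R^2 := by
    nlinarith [sq_nonneg (b + R), sq_nonneg a]
  have hsq : Real.sqrt (2*(d:ℝ)/n) < R := by
    have := Real.sqrt_lt_sqrt (by positivity) hgt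
    rwa [Real.sqrt_sq hRpos.le] at this
  have hkey : Real.sqrt (2*(n:ℝ)*d) = n * Real.sqrt (2*(d:ℝ)/n) := by
    rw [show 2*(n:ℝ)*d = (n:ℝ)^2 * (2*(d:ℝ)/n) by field_simp,
      Real.sqrt_mul (by positivity), Real.sqrt_sq hnR.le]
  -- multiply hsq by k*n
  have hmul : (k:ℝ)*n * Real.sqrt (2*(d:ℝ)/n) < (k:ℝ)*n * R :=
    (mul_lt_mul_iff_right₀ hknR).mpr hsq
  have hRex : (k:ℝ)*n * R = (d:ℝ) - d₁ + (k:ℝ)^2*n/2 := by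
    rw [hR]; field_simp
  rw [hkey]
  nlinarith [hmul, hRex]
end

section
/- Let x, y be rational numbers and n, d positive integers such that: (i) y = -((d/n + n/2)x + d^2/(2n^2) + d/2); (ii) x^2 - 2y ≥ 0; (iii) (n-x)^2 - 2(d + n^2/2 + y) ≥ 0; (iv) 0 < x + d/n + n/2 < n. Then x = -d/n and y = d^2/(2n^2). -/
/-! On the wall, both discriminants factor through `t = x + d/n`: `Δ(A) = t (t + n)` and
`Δ(B) = t (t - n)`, while the positivity condition says `|t| < n/2`. A nonzero `t` of absolute
value less than `n` makes one of the two products negative, so `t = 0`. -/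

theorem eq_zero_of_mul_add_nonneg_of_mul_sub_nonneg {R : Type*} [CommRing R] [LinearOrder R]
    [IsStrictOrderedRing R] {t a : R} (hadd : 0 ≤ t * (t + a)) (hsub : 0 ≤ t * (t - a))
    (hlt : |t| < a) : t = 0 := by
  obtain ⟨hneg, hpos⟩ := abs_lt.mp hlt
  rcases lt_trichotomy t 0 with ht | ht | ht
  · exact absurd hadd (not_le.mpr (mul_neg_of_neg_of_pos ht (by linarith)))
  · exact ht
  · exact absurd hsub (not_le.mpr (mul_neg_of_pos_of_neg ht (by linarith)))

section WallDiscriminants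

variable {K : Type*} [Field K] [NeZero (2 : K)] {n : K} (d x : K)

theorem wall_discriminant_left (hn : n ≠ 0) :
    x ^ 2 - 2 * -((d / n + n / 2) * x + d ^ 2 / (2 * n ^ 2) + d / 2)
      = (x + d / n) * (x + d / n + n) := by
  field_simp
  ring

theorem wall_discriminant_right (hn : n ≠ 0) :
    (n - x) ^ 2 - 2 * (d + n ^ 2 / 2 + -((d / n + n / 2) * x + d ^ 2 / (2 * n ^ 2) + d / 2))
      = (x + d / n) * (x + d / n - n) := by
  field_simp
  ring

end WallDiscriminants

theorem wall_numerics_general (n d : ℕ) (x y : ℚ)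
    (h1 : y = -(((d:ℚ)/n + (n:ℚ)/2)*x + (d:ℚ)^2/(2*(n:ℚ)^2) + (d:ℚ)/2))
    (h2 : x^2 - 2*y ≥ 0)
    (h3 : ((n:ℚ) - x)^2 - 2*((d:ℚ) + (n:ℚ)^2/2 + y) ≥ 0)
    (h4l : 0 < x + (d:ℚ)/n + (n:ℚ)/2) (h4r : x + (d:ℚ)/n + (n:ℚ)/2 < (n:ℚ)) :
    x = -(d:ℚ)/n ∧ y = (d:ℚ)^2/(2*(n:ℚ)^2) := by
  have hn : (n : ℚ) ≠ 0 := by linarith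
  subst h1
  have ht : x + d / n = 0 := by
    refine eq_zero_of_mul_add_nonneg_of_mul_sub_nonneg (a := (n : ℚ)) ?_ ?_ ?_
    · rwa [← wall_discriminant_left (d : ℚ) x hn]
    · rwa [← wall_discriminant_right (d : ℚ) x hn]
    · rw [abs_lt]
      constructor <;> linarith
  have hx : x = -(d : ℚ) / n := by rw [neg_div]; linarith
  refine ⟨hx, ?_⟩
  rw [hx]
  field_simp
  ring

theorem wall_numerics (n d : ℕ) (hn : 0 < n) (hd : 0 < d) (x y : ℚ)
    (h1 : y = -(((d:ℚ)/n + (n:ℚ)/2)*x + (d:ℚ)^2/(2*(n:ℚ)^2) + (d:ℚ)/2))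
    (h2 : x^2 - 2*y ≥ 0)
    (h3 : ((n:ℚ) - x)^2 - 2*((d:ℚ) + (n:ℚ)^2/2 + y) ≥ 0)
    (h4l : 0 < x + (d:ℚ)/n + (n:ℚ)/2) (h4r : x + (d:ℚ)/n + (n:ℚ)/2 < (n:ℚ)) :
    x = -(d:ℚ)/n ∧ y = (d:ℚ)^2/(2*(n:ℚ)^2) :=
  wall_numerics_general n d x y h1 h2 h3 h4l h4r
end
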